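/- For any vectors v_1,...,v_d ∈ ℝ^d, ((Σ_{1≤i_1<...<i_d≤d} |v_1∧···∧v_d|)/C(d,d))^(1/d) ≤ ((Σ_{1≤i_1<...<i_{d-1}≤d} |v_{i_1}∧···∧v_{i_{d-1}}|)/C(d,d-1))^(1/(d-1)); equivalently, among all parallelepipeds of a given volume, the surface-area-type quantity dictates that |det(v_1,...,v_d)|^(1/d) ≤ ((1/d) Σ_{j=1}^d |v_1∧···∧v̂_j∧···∧v_d|)^(1/(d-1)). -/

import Mathlib

/-- `pvol v s` is the volume of the parallelotope spanned by the vectors `v i`, `i ∈ s`,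
i.e. the square root of the Gram determinant. -/
noncomputable def pvol {d : ℕ} {ι : Type*} [DecidableEq ι]
    (v : ι → EuclideanSpace ℝ (Fin d)) (s : Finset ι) : ℝ :=
  Real.sqrt (Matrix.det (Matrix.of fun i j : s => (inner ℝ (v i) (v j) : ℝ)))

open Finset Matrix

section Aux

variable {d : ℕ} {ι : Type*} [DecidableEq ι]

/-- Row operations (subtracting a combination of the other "vector rows") leave the
determinant unchanged. -/
private lemma det_updateRow_sub_sum
    (v : ι → EuclideanSpace ℝ (Fin d)) (s : Finset ι) (j : ι) (hj : j ∈ s)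
    (A : Matrix s s ℝ) (f : EuclideanSpace ℝ (Fin d) →ₗ[ℝ] (s → ℝ))
    (hA : ∀ i : s, i ≠ ⟨j, hj⟩ → A i = f (v ↑i)) (c : ι → ℝ)
    (t : Finset ι) :
    t ⊆ s.erase j → ∀ x : EuclideanSpace ℝ (Fin d),
    (A.updateRow ⟨j, hj⟩ (f (x - ∑ i ∈ t, c i • v i))).det
      = (A.updateRow ⟨j, hj⟩ (f x)).det := by
  induction t using Finset.induction_on with
  | empty => intro _ x; simp
  | @insert a t ha ih =>
    intro hsub x
    have hsum : x - ∑ i ∈ insert a t, c i • v i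
        = (x - c a • v a) - ∑ i ∈ t, c i • v i := by
      rw [Finset.sum_insert ha]; abel
    rw [hsum, ih (Finset.Subset.trans (Finset.subset_insert a t) hsub) (x - c a • v a)]
    have ha' : a ∈ s.erase j := hsub (Finset.mem_insert_self a t)
    set a' : s := ⟨a, Finset.mem_of_mem_erase ha'⟩ with ha'def
    have hne : a' ≠ ⟨j, hj⟩ := by
      simp only [ha'def, Ne, Subtype.ext_iff]
      exact (Finset.mem_erase.mp ha').1
    set B := A.updateRow ⟨j, hj⟩ (f x) with hB
    have hrow : f (x - c a • v a) = B ⟨j, hj⟩ + (-(c a)) • B a' := by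
      rw [hB, Matrix.updateRow_self, Matrix.updateRow_ne hne, hA a' hne]
      ext k
      simp [map_sub, _root_.map_smul, sub_eq_add_neg, ha'def]
    have hcollapse : ∀ r r' : s → ℝ,
        (A.updateRow ⟨j, hj⟩ r).updateRow ⟨j, hj⟩ r' = A.updateRow ⟨j, hj⟩ r' := by
      intro r r'
      ext i k
      by_cases h : i = (⟨j, hj⟩ : s) <;> simp [Matrix.updateRow_apply, h]
    calc (A.updateRow ⟨j, hj⟩ (f (x - c a • v a))).det
        = (B.updateRow ⟨j, hj⟩ (B ⟨j, hj⟩ + (-(c a)) • B a')).det := by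
          rw [hrow, hB, hcollapse]
      _ = B.det := Matrix.det_updateRow_add_smul_self B hne.symm (-(c a))

end Aux

section Gram

variable {d : ℕ} {ι : Type*} [DecidableEq ι]

private lemma gram_det_factor
    (v : ι → EuclideanSpace ℝ (Fin d)) (s : Finset ι) (j : ι) (hj : j ∈ s) :
    (Matrix.of fun i k : s => (inner ℝ (v i) (v k) : ℝ)).det
      = ‖v j - (Submodule.orthogonalProjection (Submodule.span ℝ (v '' (s.erase j : Set ι))) (v j) :
          EuclideanSpace ℝ (Fin d))‖ ^ 2
        * (Matrix.of fun i k : (s.erase j) => (inner ℝ (v i) (v k) : ℝ)).det := by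
  classical
  set K := Submodule.span ℝ (v '' (s.erase j : Set ι)) with hK
  set p : EuclideanSpace ℝ (Fin d) := (Submodule.orthogonalProjection K (v j) : EuclideanSpace ℝ (Fin d)) with hpdef
  set q : EuclideanSpace ℝ (Fin d) := v j - p with hqdef
  have hq_orth : ∀ y ∈ K, (inner ℝ q y : ℝ) = 0 := Submodule.starProjection_inner_eq_zero (v j)
  have hvK : ∀ i : ι, i ∈ s.erase j → v i ∈ K := fun i hi =>
    Submodule.subset_span (Set.mem_image_of_mem v hi)
  -- coefficients
  have hpK : p ∈ Submodule.span ℝ (Set.range fun i : {x // x ∈ s.erase j} => v ↑i) := by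
    have h2 : p ∈ K := (Submodule.orthogonalProjection K (v j)).2
    rw [hK, Set.image_eq_range] at h2
    exact h2
  rw [Submodule.mem_span_range_iff_exists_fun] at hpK
  obtain ⟨c, hc⟩ := hpK
  set c' : ι → ℝ := fun i => if h : i ∈ s.erase j then c ⟨i, h⟩ else 0 with hc'def
  have hp' : ∑ i ∈ s.erase j, c' i • v i = p := by
    rw [← Finset.sum_coe_sort (s.erase j) (fun i => c' i • v i), ← hc]
    refine Fintype.sum_congr _ _ fun i => ?_
    have : c' ↑i = c i := by rw [hc'def]; simp [i.2]
    rw [this]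
  have hq : q = v j - ∑ i ∈ s.erase j, c' i • v i := by rw [hqdef, hp']
  set j' : {x // x ∈ s} := ⟨j, hj⟩ with hj'def
  set G : Matrix s s ℝ := Matrix.of fun i k : s => (inner ℝ (v i) (v k) : ℝ) with hG
  set f1 : EuclideanSpace ℝ (Fin d) →ₗ[ℝ] (s → ℝ) :=
    { toFun := fun x => fun k => (inner ℝ x (v ↑k) : ℝ)
      map_add' := by intro x y; funext k; exact inner_add_left _ _ _
      map_smul' := by intro r x; funext k; simp [real_inner_smul_left, Finset.mul_sum, mul_assoc] } with hf1
  have hA1 : ∀ i : s, i ≠ j' → G i = f1 (v ↑i) := fun i _ => rfl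
  set G1 : Matrix s s ℝ := G.updateRow j' (f1 q) with hG1
  have step1 : G1.det = G.det := by
    have := det_updateRow_sub_sum v s j hj G f1 hA1 c' (s.erase j)
      (Finset.Subset.refl _) (v j)
    rw [← hq] at this
    rw [hG1, this]
    have : f1 (v j) = G j' := rfl
    rw [this, Matrix.updateRow_eq_self]
  set w : ι → EuclideanSpace ℝ (Fin d) := Function.update v j q with hw
  have hwne : ∀ i : ι, i ≠ j → w i = v i := fun i hi => Function.update_of_ne hi _ _
  have hwj : w j = q := Function.update_self _ _ _
  set f2 : EuclideanSpace ℝ (Fin d) →ₗ[ℝ] (s → ℝ) :=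
    { toFun := fun x => fun k => (inner ℝ (w ↑k) x : ℝ)
      map_add' := by intro x y; funext k; exact inner_add_right _ _ _
      map_smul' := by intro r x; funext k; simp [real_inner_smul_right, Finset.mul_sum, mul_assoc, mul_left_comm] } with hf2
  have hA2 : ∀ i : s, i ≠ j' → G1ᵀ i = f2 (v ↑i) := by
    intro i hi
    funext k
    show G1 k i = (inner ℝ (w ↑k) (v ↑i) : ℝ)
    by_cases hk : k = j'
    · subst hk
      rw [hG1, Matrix.updateRow_self]
      show (inner ℝ q (v ↑i) : ℝ) = (inner ℝ (w j) (v ↑i) : ℝ)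
      rw [hwj]
    · rw [hG1, Matrix.updateRow_ne hk]
      have : w ↑k = v ↑k := hwne _ (fun h => hk (Subtype.ext h))
      rw [this]
      rfl
  set GW : Matrix s s ℝ := Matrix.of fun i k : s => (inner ℝ (w ↑i) (w ↑k) : ℝ) with hGW
  have step2 : GW.det = G1.det := by
    have h0 := det_updateRow_sub_sum v s j hj G1ᵀ f2 hA2 c' (s.erase j)
      (Finset.Subset.refl _) (v j)
    rw [← hq] at h0
    have hR : f2 (v j) = G1ᵀ j' := by
      funext k
      show (inner ℝ (w ↑k) (v j) : ℝ) = G1 k j'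
      by_cases hk : k = j'
      · subst hk
        rw [hG1, Matrix.updateRow_self]
        show (inner ℝ (w j) (v j) : ℝ) = (inner ℝ q (v j) : ℝ)
        rw [hwj]
      · rw [hG1, Matrix.updateRow_ne hk]
        have : w ↑k = v ↑k := hwne _ (fun h => hk (Subtype.ext h))
        rw [this]
        rfl
    have hL : G1ᵀ.updateRow j' (f2 q) = GWᵀ := by
      ext i k
      by_cases hi : i = j'
      · subst hi
        rw [Matrix.updateRow_self]
        show (inner ℝ (w ↑k) q : ℝ) = (inner ℝ (w ↑k) (w j) : ℝ)
        rw [hwj]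
      · rw [Matrix.updateRow_ne hi]
        show G1 k i = (inner ℝ (w ↑k) (w ↑i) : ℝ)
        have hwi : w ↑i = v ↑i := hwne _ (fun h => hi (Subtype.ext h))
        by_cases hk : k = j'
        · subst hk
          rw [hG1, Matrix.updateRow_self, hwi]
          show (inner ℝ q (v ↑i) : ℝ) = (inner ℝ (w j) (v ↑i) : ℝ)
          rw [hwj]
        · rw [hG1, Matrix.updateRow_ne hk, hwi,
            hwne _ (fun h => hk (Subtype.ext h))]
          rfl
    rw [hR, Matrix.updateRow_eq_self] at h0
    rw [hL] at h0
    calc GW.det = GWᵀ.det := (Matrix.det_transpose _).symm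
      _ = G1ᵀ.det := h0
      _ = G1.det := Matrix.det_transpose _
  -- block decomposition
  have hjK : ∀ k : {x // x ∈ s.erase j}, v ↑k ∈ K := fun k => hvK ↑k k.2
  let e : Unit ⊕ {x // x ∈ s.erase j} ≃ {x // x ∈ s} :=
    { toFun := Sum.elim (fun _ => j') (fun i => ⟨↑i, Finset.mem_of_mem_erase i.2⟩)
      invFun := fun i => if h : (↑i : ι) = j then Sum.inl ()
        else Sum.inr ⟨↑i, Finset.mem_erase.mpr ⟨h, i.2⟩⟩
      left_inv := by
        rintro (u | i)
        · simp [hj'def]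
        · have : (↑i : ι) ≠ j := (Finset.mem_erase.mp i.2).1
          simp [this]
      right_inv := by
        intro i
        by_cases h : (↑i : ι) = j
        · simp only [dif_pos h, Sum.elim_inl]
          exact Subtype.ext h.symm
        · simp only [dif_neg h, Sum.elim_inr] }
  have hblock : GW.submatrix e e
      = Matrix.fromBlocks (Matrix.of fun _ _ : Unit => ‖q‖ ^ 2) 0 0
          (Matrix.of fun i k : (s.erase j) => (inner ℝ (v i) (v k) : ℝ)) := by
    ext i k
    rcases i with u | i <;> rcases k with u' | k
    · show (inner ℝ (w j) (w j) : ℝ) = ‖q‖ ^ 2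
      rw [hwj]
      exact real_inner_self_eq_norm_sq q
    · show (inner ℝ (w j) (w ↑k) : ℝ) = 0
      rw [hwj, hwne _ (Finset.mem_erase.mp k.2).1]
      exact hq_orth _ (hjK k)
    · show (inner ℝ (w ↑i) (w j) : ℝ) = 0
      rw [hwj, hwne _ (Finset.mem_erase.mp i.2).1, real_inner_comm]
      exact hq_orth _ (hjK i)
    · show (inner ℝ (w ↑i) (w ↑k) : ℝ) = (inner ℝ (v ↑i) (v ↑k) : ℝ)
      rw [hwne _ (Finset.mem_erase.mp i.2).1, hwne _ (Finset.mem_erase.mp k.2).1]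
  calc G.det = GW.det := (step2.trans step1).symm
    _ = (GW.submatrix e e).det := (Matrix.det_submatrix_equiv_self e GW).symm
    _ = ‖q‖ ^ 2 * (Matrix.of fun i k : (s.erase j) => (inner ℝ (v i) (v k) : ℝ)).det := by
        rw [hblock, Matrix.det_fromBlocks_zero₂₁, Matrix.det_unique]
        rfl

/-- Base change formula: the parallelotope volume is the base times the height. -/
lemma pvol_erase (v : ι → EuclideanSpace ℝ (Fin d)) (s : Finset ι) (j : ι) (hj : j ∈ s) :
    pvol v s
      = ‖v j - (Submodule.orthogonalProjection (Submodule.span ℝ (v '' (s.erase j : Set ι))) (v j) :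
          EuclideanSpace ℝ (Fin d))‖ * pvol v (s.erase j) := by
  unfold pvol
  rw [gram_det_factor v s j hj, Real.sqrt_mul (sq_nonneg _), Real.sqrt_sq (norm_nonneg _)]

lemma pvol_nonneg (v : ι → EuclideanSpace ℝ (Fin d)) (s : Finset ι) : 0 ≤ pvol v s :=
  Real.sqrt_nonneg _

lemma pvol_empty (v : ι → EuclideanSpace ℝ (Fin d)) : pvol v (∅ : Finset ι) = 1 := by
  unfold pvol
  rw [Matrix.det_isEmpty, Real.sqrt_one]

lemma norm_sub_proj_mono {K K' : Submodule ℝ (EuclideanSpace ℝ (Fin d))} (h : K ≤ K')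
    (x : EuclideanSpace ℝ (Fin d)) :
    ‖x - (Submodule.orthogonalProjection K' x : EuclideanSpace ℝ (Fin d))‖
      ≤ ‖x - (Submodule.orthogonalProjection K x : EuclideanSpace ℝ (Fin d))‖ := by
  set a : EuclideanSpace ℝ (Fin d) := x - Submodule.orthogonalProjection K' x with ha
  set b : EuclideanSpace ℝ (Fin d) :=
    (Submodule.orthogonalProjection K' x : EuclideanSpace ℝ (Fin d)) - Submodule.orthogonalProjection K x with hb
  have hbK : b ∈ K' := Submodule.sub_mem K' (Submodule.orthogonalProjection K' x).2 (h (Submodule.orthogonalProjection K x).2)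
  have h0 : (inner ℝ a b : ℝ) = 0 := Submodule.starProjection_inner_eq_zero x b hbK
  have hid : x - (Submodule.orthogonalProjection K x : EuclideanSpace ℝ (Fin d)) = a + b := by
    rw [ha, hb]; abel
  have hsq : ‖a‖ ^ 2 ≤ ‖a + b‖ ^ 2 := by
    rw [norm_add_sq_real, h0]
    nlinarith [sq_nonneg ‖b‖]
  rw [hid]
  have h2 := Real.sqrt_le_sqrt hsq
  rwa [Real.sqrt_sq (norm_nonneg _), Real.sqrt_sq (norm_nonneg _)] at h2

lemma prod_height_le_pvol [Fintype ι] (v : ι → EuclideanSpace ℝ (Fin d)) (s : Finset ι) :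
    (∏ j ∈ s, ‖v j - (Submodule.orthogonalProjection
        (Submodule.span ℝ (v '' ((Finset.univ : Finset ι).erase j : Set ι))) (v j) :
        EuclideanSpace ℝ (Fin d))‖) ≤ pvol v s := by
  induction s using Finset.induction_on with
  | empty => rw [Finset.prod_empty, pvol_empty]
  | @insert a t ha ih =>
    rw [Finset.prod_insert ha, pvol_erase v (insert a t) a (Finset.mem_insert_self a t),
      Finset.erase_insert ha]
    refine mul_le_mul ?_ ih (Finset.prod_nonneg fun i _ => norm_nonneg _) (norm_nonneg _)
    refine norm_sub_proj_mono (Submodule.span_mono (Set.image_mono ?_)) (v a)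
    intro i hi
    simp only [Finset.coe_erase, Set.mem_diff, Finset.coe_univ, Set.mem_univ, true_and,
      Set.mem_singleton_iff]
    rintro rfl
    exact ha hi

end Gram


/-- The `k = d`, `p = 1` vector-valued Maclaurin inequality: among parallelepipeds with fixed
volume, the cube minimises the facet-volume sum. -/
theorem vector_maclaurin_k_eq_d (d : ℕ) (hd : 2 ≤ d) (v : Fin d → EuclideanSpace ℝ (Fin d)) :
    pvol v Finset.univ ^ ((1 : ℝ) / d) ≤
      ((∑ j, pvol v (Finset.univ.erase j)) / d) ^ ((1 : ℝ) / ((d - 1 : ℕ) : ℝ)) := by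
  classical
  have hd0 : (0:ℝ) < (d:ℝ) := by
    exact_mod_cast Nat.lt_of_lt_of_le Nat.zero_lt_two hd
  set e : ℕ := d - 1 with he
  have he0 : (0:ℝ) < (e:ℝ) := by
    have : 1 ≤ e := by omega
    exact_mod_cast Nat.lt_of_lt_of_le Nat.zero_lt_one this
  set V : ℝ := pvol v Finset.univ with hV
  set F : Fin d → ℝ := fun j => pvol v (Finset.univ.erase j) with hF
  set H : Fin d → ℝ := fun j =>
    ‖v j - (Submodule.orthogonalProjection
        (Submodule.span ℝ (v '' ((Finset.univ : Finset (Fin d)).erase j : Set (Fin d)))) (v j) :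
        EuclideanSpace ℝ (Fin d))‖ with hH
  have hVF : ∀ j, V = H j * F j := fun j => pvol_erase v Finset.univ j (Finset.mem_univ j)
  have hHF : ∀ j, (∏ i ∈ Finset.univ.erase j, H i) ≤ F j := fun j =>
    prod_height_le_pvol v (Finset.univ.erase j)
  have hprodH : (∏ j, H j) ≤ V := prod_height_le_pvol v Finset.univ
  have hFnn : ∀ j, 0 ≤ F j := fun j => pvol_nonneg v _
  have hVnn : 0 ≤ V := pvol_nonneg v _
  have hAnn : (0:ℝ) ≤ (∑ j, F j) / d :=
    div_nonneg (Finset.sum_nonneg fun j _ => hFnn j) hd0.le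
  rcases eq_or_lt_of_le hVnn with hV0 | hVpos
  · rw [← hV0, Real.zero_rpow (by positivity)]
    exact Real.rpow_nonneg hAnn _
  · have hHpos : ∀ j, 0 < H j := by
      intro j
      refine lt_of_le_of_ne (norm_nonneg _) (Ne.symm ?_)
      intro h0
      rw [hVF j, h0, zero_mul] at hVpos
      exact lt_irrefl 0 hVpos
    have hFpos : ∀ j, 0 < F j := by
      intro j
      refine lt_of_le_of_ne (hFnn j) (Ne.symm ?_)
      intro h0
      rw [hVF j, h0, mul_zero] at hVpos
      exact lt_irrefl 0 hVpos
    have hprodHpos : 0 < ∏ j, H j := Finset.prod_pos fun j _ => hHpos j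
    -- key product bound
    have h1 : (∏ j, F j) = V ^ d / ∏ j, H j := by
      have : ∀ j : Fin d, F j = V / H j := fun j => by
        rw [eq_div_iff (hHpos j).ne']
        rw [mul_comm]
        exact (hVF j).symm
      rw [Finset.prod_congr rfl fun j _ => this j, Finset.prod_div_distrib,
        Finset.prod_const, Finset.card_univ, Fintype.card_fin]
    have key : V ^ e ≤ ∏ j, F j := by
      rw [h1]
      have h2 : V ^ d / V ≤ V ^ d / ∏ j, H j := by
        gcongr

      have h3 : V ^ d / V = V ^ e := by
        rw [eq_comm, eq_div_iff hVpos.ne', ← pow_succ, he, Nat.sub_add_cancel (by omega)]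
      rw [← h3]
      exact h2
    -- AM-GM
    have hsum1 : ∑ _j : Fin d, (1:ℝ)/(d:ℝ) = 1 := by
      rw [Finset.sum_const, Finset.card_univ, Fintype.card_fin, nsmul_eq_mul]
      field_simp
    have amgm := Real.geom_mean_le_arith_mean_weighted Finset.univ (fun _ => (1:ℝ)/(d:ℝ)) F
      (fun i _ => by positivity) hsum1 (fun i _ => (hFpos i).le)
    rw [Real.finset_prod_rpow _ _ (fun i _ => (hFpos i).le)] at amgm
    have hRHS : ∑ i : Fin d, (1:ℝ)/(d:ℝ) * F i = (∑ j, F j) / d := by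
      rw [Finset.sum_div]
      exact Finset.sum_congr rfl fun i _ => by ring
    rw [hRHS] at amgm
    -- chain
    have step : V ^ (((e:ℝ))/(d:ℝ)) ≤ (∑ j, F j) / d := by
      have c1 : V ^ (((e:ℝ))/(d:ℝ)) = (V ^ e : ℝ) ^ ((1:ℝ)/(d:ℝ)) := by
        rw [← Real.rpow_natCast V e, ← Real.rpow_mul hVnn, mul_one_div]
      rw [c1]
      calc ((V ^ e : ℝ)) ^ ((1:ℝ)/(d:ℝ))
          ≤ (∏ j, F j) ^ ((1:ℝ)/(d:ℝ)) :=
            Real.rpow_le_rpow (pow_nonneg hVnn e) key (by positivity)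
        _ ≤ (∑ j, F j) / d := amgm
    have final : V ^ ((1:ℝ)/(d:ℝ)) ≤ ((∑ j, F j) / d) ^ ((1:ℝ)/(e:ℝ)) := by
      have c2 : (V ^ (((e:ℝ))/(d:ℝ))) ^ ((1:ℝ)/(e:ℝ)) = V ^ ((1:ℝ)/(d:ℝ)) := by
        rw [← Real.rpow_mul hVnn]
        congr 1
        field_simp
      rw [← c2]
      exact Real.rpow_le_rpow (Real.rpow_nonneg hVnn _) step (by positivity)
    exact final
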